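/- arXiv:1507.00287 — 2 statements merged into one kernel-verified Lean document; each statement's English description precedes it below -/
import Mathlib

section
/- In the perturbed Arnoldi iteration, if the relation A q_l + w_l = Σ_{i=1}^{l+1} [T̃]_{i,l} q_i + Σ_{i=1}^{l} [E]_{i,l} q_i holds for l = 1,…,m, where Q_m = [q_1,…,q_m] has orthonormal columns, q_{m+1} ⊥ range(Q_m), W_m = [w_1,…,w_m], and E = [Q_m† W_m]_U (the upper-triangular-including-diagonal part), then Q_m† A Q_m = T̃_m − [Q_m† W_m]_{SL}, where [·]_{SL} denotes the strictly lower triangular part. -/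
open Matrix Complex Finset

noncomputable def frobSq {m n : Type*} [Fintype m] [Fintype n] (A : Matrix m n ℂ) : ℝ :=
  ∑ i, ∑ j, ‖A i j‖ ^ 2

noncomputable def frob {m n : Type*} [Fintype m] [Fintype n] (A : Matrix m n ℂ) : ℝ :=
  Real.sqrt (frobSq A)

noncomputable def l2sq {m : Type*} [Fintype m] (x : m → ℂ) : ℝ := ∑ i, ‖x i‖ ^ 2

noncomputable def l2 {m : Type*} [Fintype m] (x : m → ℂ) : ℝ := Real.sqrt (l2sq x)

/-- the perturbed Arnoldi factorization identity (Lemma 1, P1). -/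
theorem stmt8 {M m : ℕ} (A : Matrix (Fin M) (Fin M) ℂ)
    (qq : Fin (m + 1) → Fin M → ℂ)
    (Q : Matrix (Fin M) (Fin m) ℂ) (hQdef : ∀ i l, Q i l = qq l.castSucc i)
    (hQ : Qᴴ * Q = 1) (horth : Qᴴ.mulVec (qq (Fin.last m)) = 0)
    (w : Fin m → Fin M → ℂ)
    (Wm : Matrix (Fin M) (Fin m) ℂ) (hW : ∀ i l, Wm i l = w l i)
    (Th : Matrix (Fin (m + 1)) (Fin m) ℂ)
    (hHess : ∀ (i : Fin (m + 1)) (l : Fin m), (l : ℕ) + 1 < (i : ℕ) → Th i l = 0)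
    (E : Matrix (Fin m) (Fin m) ℂ)
    (hE : ∀ i l, E i l = if (i : ℕ) ≤ (l : ℕ) then (Qᴴ * Wm) i l else 0)
    (hrel : ∀ l : Fin m, A.mulVec (qq l.castSucc) + w l =
      (∑ i : Fin (m + 1), (if (i : ℕ) ≤ (l : ℕ) + 1 then Th i l else 0) • qq i) +
      ∑ i : Fin m, E i l • qq i.castSucc) :
    ∀ i l : Fin m, (Qᴴ * A * Q) i l =
      Th i.castSucc l - (if (l : ℕ) < (i : ℕ) then (Qᴴ * Wm) i l else 0) := by
  intro i l
  have hS : ∀ j : Fin m, ∑ k, Qᴴ i k * qq j.castSucc k = if i = j then 1 else 0 := by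
    intro j
    have h := congrFun (congrFun hQ i) j
    simpa [Matrix.mul_apply, hQdef, Matrix.one_apply] using h
  have hSlast : ∑ k, Qᴴ i k * qq (Fin.last m) k = 0 := by
    have h := congrFun horth i
    simpa [Matrix.mulVec, dotProduct] using h
  have hQAQ : (Qᴴ * A * Q) i l = ∑ k, Qᴴ i k * A.mulVec (qq l.castSucc) k := by
    simp only [Matrix.mul_apply, Matrix.mulVec, dotProduct, hQdef, Finset.sum_mul,
      Finset.mul_sum]
    rw [Finset.sum_comm]
    exact Finset.sum_congr rfl fun k _ => Finset.sum_congr rfl fun j _ => by ring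
  have hval : ∀ k, A.mulVec (qq l.castSucc) k =
      (∑ j : Fin (m + 1), (if (j : ℕ) ≤ (l : ℕ) + 1 then Th j l else 0) * qq j k) +
      (∑ j : Fin m, E j l * qq j.castSucc k) - w l k := by
    intro k
    have h := congrFun (hrel l) k
    simp only [Pi.add_apply, Finset.sum_apply, Pi.smul_apply, smul_eq_mul] at h
    linear_combination h
  have hQW : ∑ k, Qᴴ i k * w l k = (Qᴴ * Wm) i l := by
    simp [Matrix.mul_apply, hW]
  rw [hQAQ]
  calc ∑ k, Qᴴ i k * A.mulVec (qq l.castSucc) k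
      = (∑ j : Fin (m + 1), (if (j : ℕ) ≤ (l : ℕ) + 1 then Th j l else 0) *
          ∑ k, Qᴴ i k * qq j k) +
        (∑ j : Fin m, E j l * ∑ k, Qᴴ i k * qq j.castSucc k) -
        ∑ k, Qᴴ i k * w l k := by
        simp only [hval, mul_sub, mul_add, Finset.sum_sub_distrib, Finset.sum_add_distrib,
          Finset.mul_sum]
        congr 2
        · rw [Finset.sum_comm]
          exact Finset.sum_congr rfl fun k _ => Finset.sum_congr rfl fun j _ => by ring
        · rw [Finset.sum_comm]
          exact Finset.sum_congr rfl fun k _ => Finset.sum_congr rfl fun j _ => by ring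
    _ = Th i.castSucc l + E i l - (Qᴴ * Wm) i l := by
        rw [hQW]
        congr 1
        congr 1
        · rw [Fin.sum_univ_castSucc]
          simp only [hSlast, mul_zero, add_zero, hS]
          rw [Finset.sum_eq_single i]
          · by_cases h : (i : ℕ) ≤ (l : ℕ) + 1
            · simp [h]
            · simp [h, hHess i.castSucc l (by simp only [Fin.coe_castSucc]; omega)]
          · intro b _ hb
            simp [if_neg (Ne.symm hb)]
          · simp
        · simp only [hS]
          rw [Finset.sum_eq_single i]
          · simp
          · intro b _ hb
            simp [if_neg (Ne.symm hb)]
          · simp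
    _ = Th i.castSucc l - (if (l : ℕ) < (i : ℕ) then (Qᴴ * Wm) i l else 0) := by
        rw [hE]
        by_cases h : (i : ℕ) ≤ (l : ℕ)
        · rw [if_pos h, if_neg (by omega)]; ring
        · rw [if_neg h, if_pos (by omega)]; ring
end

section
/- Let C ∈ ℂ^{m×m} be diagonalizable as C = S Λ S^{-1} with S unitary, and let T = C + P for some P ∈ ℂ^{m×m}. Then every eigenvalue λ̃ of T satisfies |λ̃ − λ| ≤ ‖P‖₂ (spectral norm) for some eigenvalue λ of C. -/
open Matrix Complex Finset

/-- Spectral (l2 operator) norm of a square complex matrix. -/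
noncomputable def specNorm {m : ℕ} (P : Matrix (Fin m) (Fin m) ℂ) : ℝ :=
  ‖Matrix.toEuclideanCLM (𝕜 := ℂ) P‖

/-!
With `w = S⁻¹ v`, the eigen-equation `(C + P) v = λ v` becomes `S ((λ - Λ) w) = P v`. Since `S` is
an ℓ²-isometry, `‖(λ - Λ) w‖ = ‖P v‖ ≤ ‖P‖ ‖w‖`, while `λ - Λ` is diagonal, so
`‖(λ - Λ) w‖ ≥ minᵢ |λ - Λᵢᵢ| ‖w‖`. The minimising `Λᵢᵢ` is an eigenvalue of `C`, with eigenvector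
`S eᵢ`.
-/

section EuclideanNorm

variable {𝕜 ι : Type*} [RCLike 𝕜] [Fintype ι]

theorem norm_toLp_mulVec_of_mem_unitaryGroup [DecidableEq ι] {S : Matrix ι ι 𝕜}
    (hS : S ∈ unitaryGroup ι 𝕜) (w : ι → 𝕜) :
    ‖WithLp.toLp 2 (S *ᵥ w)‖ = ‖WithLp.toLp 2 w‖ :=
  ContinuousLinearMap.norm_map_of_mem_unitary
    (Unitary.map_mem (toEuclideanCLM (n := ι) (𝕜 := 𝕜)) hS) (WithLp.toLp 2 w)

theorem mul_norm_toLp_le_norm_toLp_mul {r : ℝ} (hr : 0 ≤ r) {d : ι → 𝕜} (hd : ∀ i, r ≤ ‖d i‖)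
    (w : ι → 𝕜) : r * ‖WithLp.toLp 2 w‖ ≤ ‖WithLp.toLp 2 (d * w)‖ := by
  refine (pow_le_pow_iff_left₀ (by positivity) (norm_nonneg _) two_ne_zero).mp ?_
  simp only [mul_pow, EuclideanSpace.norm_sq_eq, Finset.mul_sum, Pi.mul_apply, norm_mul]
  gcongr with i
  exact hd i

theorem exists_norm_le_of_norm_toLp_mul_le {d w : ι → 𝕜} (hw : w ≠ 0) {c : ℝ}
    (h : ‖WithLp.toLp 2 (d * w)‖ ≤ c * ‖WithLp.toLp 2 w‖) : ∃ i, ‖d i‖ ≤ c := by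
  obtain ⟨j, -⟩ := Function.ne_iff.mp hw
  obtain ⟨i, -, hi⟩ := exists_min_image univ (fun i => ‖d i‖) ⟨j, mem_univ j⟩
  have hw_pos : 0 < ‖WithLp.toLp 2 w‖ := norm_pos_iff.mpr (by simpa using hw)
  exact ⟨i, le_of_mul_le_mul_right
    ((mul_norm_toLp_le_norm_toLp_mul (norm_nonneg _) (fun k => hi k (mem_univ k)) w).trans h)
    hw_pos⟩

end EuclideanNorm

theorem norm_toLp_mulVec_le_specNorm {m : ℕ} (P : Matrix (Fin m) (Fin m) ℂ) (x : Fin m → ℂ) :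
    ‖WithLp.toLp 2 (P *ᵥ x)‖ ≤ specNorm P * ‖WithLp.toLp 2 x‖ :=
  (toEuclideanCLM (𝕜 := ℂ) P).le_opNorm (WithLp.toLp 2 x)

theorem exists_conj_diag_mulVec_eq_smul {R ι : Type*} [CommRing R] [Nontrivial R] [Fintype ι]
    [DecidableEq ι] {S Λ : Matrix ι ι R} (hS : IsUnit S.det) (hΛ : Λ.IsDiag) (i : ι) :
    ∃ u, u ≠ 0 ∧ (S * Λ * S⁻¹) *ᵥ u = Λ i i • u := by
  set e : ι → R := Pi.single i 1
  have hinv : S⁻¹ *ᵥ (S *ᵥ e) = e := by rw [mulVec_mulVec, nonsing_inv_mul S hS, one_mulVec]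
  have hΛe : Λ *ᵥ e = Λ i i • e := by
    rw [← hΛ.diagonal_diag]
    ext j
    by_cases hj : j = i <;> simp [e, mulVec_diagonal, hj]
  refine ⟨S *ᵥ e, fun h => ?_, ?_⟩
  · rw [h, mulVec_zero] at hinv
    simpa [e] using congrFun hinv i
  · rw [← mulVec_mulVec, ← mulVec_mulVec, hinv, hΛe, mulVec_smul]

theorem exists_norm_sub_diag_le_specNorm {m : ℕ} {S Λ P : Matrix (Fin m) (Fin m) ℂ}
    (hS : S ∈ unitaryGroup (Fin m) ℂ) (hΛ : Λ.IsDiag) {lam : ℂ} {v : Fin m → ℂ} (hv : v ≠ 0)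
    (hv_eig : (S * Λ * S⁻¹ + P) *ᵥ v = lam • v) : ∃ i, ‖lam - Λ i i‖ ≤ specNorm P := by
  set w := S⁻¹ *ᵥ v
  have hSw : S *ᵥ w = v := by
    rw [mulVec_mulVec, mul_nonsing_inv S (isUnit_det_of_left_inverse hS.1), one_mulVec]
  have hw : w ≠ 0 := fun h => hv (by rw [← hSw, h, mulVec_zero])
  have hdiag : (fun i => lam - Λ i i) * w = lam • w - Λ *ᵥ w := by
    rw [← hΛ.diagonal_diag]
    ext i
    simp [mulVec_diagonal, sub_mul]
  have hPv : S *ᵥ ((fun i => lam - Λ i i) * w) = P *ᵥ v := by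
    rw [hdiag, mulVec_sub, mulVec_smul, hSw, mulVec_mulVec, mulVec_mulVec]
    rw [add_mulVec] at hv_eig
    exact (eq_sub_of_add_eq' hv_eig).symm
  refine exists_norm_le_of_norm_toLp_mul_le hw ?_
  calc ‖WithLp.toLp 2 ((fun i => lam - Λ i i) * w)‖
      = ‖WithLp.toLp 2 (P *ᵥ v)‖ := by rw [← hPv, norm_toLp_mulVec_of_mem_unitaryGroup hS]
    _ ≤ specNorm P * ‖WithLp.toLp 2 v‖ := norm_toLp_mulVec_le_specNorm P v
    _ = specNorm P * ‖WithLp.toLp 2 w‖ := by rw [← hSw, norm_toLp_mulVec_of_mem_unitaryGroup hS]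

/-- Bauer–Fike theorem for unitarily diagonalizable matrices. -/
theorem stmt9 {m : ℕ} (C S Λ P T : Matrix (Fin m) (Fin m) ℂ)
    (hS : S ∈ Matrix.unitaryGroup (Fin m) ℂ) (hΛ : Λ.IsDiag)
    (hC : C = S * Λ * S⁻¹) (hT : T = C + P) :
    ∀ lam : ℂ, (∃ v, v ≠ 0 ∧ T.mulVec v = lam • v) →
      ∃ mu : ℂ, (∃ u, u ≠ 0 ∧ C.mulVec u = mu • u) ∧ ‖lam - mu‖ ≤ specNorm P := by
  rintro lam ⟨v, hv, hv_eig⟩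
  subst hC hT
  obtain ⟨i, hi⟩ := exists_norm_sub_diag_le_specNorm hS hΛ hv hv_eig
  exact ⟨Λ i i, exists_conj_diag_mulVec_eq_smul (isUnit_det_of_left_inverse hS.1) hΛ i, hi⟩
end
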